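/- Let α, β > 0 and k, ℓ, n ∈ ℕ. Let P = {τ₁,…,τₙ} be polygonal curves and for each i let τ̂_i ∈ Δ_ℓ satisfy d_F(τ_i, τ̂_i) ≤ α · inf_{π ∈ Δ_ℓ} d_F(τ_i, π); write P̂ = {τ̂₁,…,τ̂ₙ}. Let C ⊆ Δ_ℓ with |C| = k. (a) If cost_∞(P̂, C) ≤ β · opt^{(∞)}_{k,ℓ}(P̂), then D_∞ := cost_∞(P̂, C) + max_{1≤i≤n} d_F(τ_i, τ̂_i) satisfies cost_∞(P, C) ≤ D_∞ ≤ (α + β + αβ) · opt^{(∞)}_{k,ℓ}(P). (b) If cost₁(P̂, C) ≤ β · opt^{(1)}_{k,ℓ}(P̂), then D₁ := cost₁(P̂, C) + Σ_{1≤i≤n} d_F(τ_i, τ̂_i) satisfies cost₁(P, C) ≤ D₁ ≤ (α + β + αβ) · opt^{(1)}_{k,ℓ}(P). -/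

import Mathlib

open Set

/-- A valid reparametrization of `[0,1]`: a continuous strictly increasing
bijection of `[0,1]` onto itself fixing the endpoints. -/
def IsReparam (f : ℝ → ℝ) : Prop :=
  ContinuousOn f (Set.Icc 0 1) ∧ StrictMonoOn f (Set.Icc 0 1) ∧ f 0 = 0 ∧ f 1 = 1

/-- The Fréchet distance between two curves `τ, π : [0,1] → ℝ`:
`inf_f sup_{t ∈ [0,1]} |τ(f(t)) - π(t)|` over reparametrizations `f`. -/
noncomputable def frechetDist (τ π : ℝ → ℝ) : ℝ :=
  ⨅ f : {f : ℝ → ℝ // IsReparam f}, ⨆ t : Set.Icc (0:ℝ) 1, |τ (f.1 ↑t) - π ↑t|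

/-- `τ` is the polygonal curve on `[0,1]` with the `m` vertices `w 0, …, w (m-1)`
attained at parameters `t 0 = 0 < t 1 < … < t (m-1) = 1`, obtained by linear
interpolation. -/
def IsPolyOn (τ : ℝ → ℝ) (m : ℕ) (t w : ℕ → ℝ) : Prop :=
  2 ≤ m ∧ t 0 = 0 ∧ t (m - 1) = 1 ∧ (∀ i, i + 1 < m → t i < t (i + 1)) ∧
  (∀ i, i + 1 < m → ∀ u ∈ Set.Icc (t i) (t (i + 1)),
    τ u = w i + (u - t i) / (t (i + 1) - t i) * (w (i + 1) - w i))

/-- `τ` is a polygonal curve (with finitely many vertices). -/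
def IsPolyCurve (τ : ℝ → ℝ) : Prop := ∃ m t w, IsPolyOn τ m t w

/-- `c` is a polygonal curve with at most `ℓ` vertices, i.e. an element of `Δ_ℓ`. -/
def InDeltaL (ℓ : ℕ) (c : ℝ → ℝ) : Prop := ∃ m t w, m ≤ ℓ ∧ IsPolyOn c m t w

/-- General position of the vertex sequence `w 0, …, w (m-1)`: pairwise distinct
vertex values, pairwise distinct differences, and no vertex inside the closed
interval spanned by its two neighbours. -/
def GenPos (m : ℕ) (w : ℕ → ℝ) : Prop :=
  (∀ i j, i < m → j < m → i ≠ j → w i ≠ w j) ∧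
  (∀ i j p q, i < m → j < m → p < m → q < m → i ≠ j → p ≠ q →
      (i, j) ≠ (p, q) → w i - w j ≠ w p - w q) ∧
  (∀ i, i + 2 < m → w (i + 1) ∉ Set.uIcc (w i) (w (i + 2)))

/-- The parameters `s 0 = 0 < s 1 < … < s (ℓ-1) = 1` define a `δ`-signature of the
curve `τ` (Definition 3.3 of the paper, `0`-indexed): non-degeneracy,
direction-preservation, minimum edge length and range conditions. -/
def IsSignature (δ : ℝ) (τ : ℝ → ℝ) (ℓ : ℕ) (s : ℕ → ℝ) : Prop :=
  2 ≤ ℓ ∧ s 0 = 0 ∧ s (ℓ - 1) = 1 ∧ (∀ i, i + 1 < ℓ → s i < s (i + 1)) ∧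
  (∀ i, 1 ≤ i → i + 1 < ℓ → τ (s i) ∉ Set.uIcc (τ (s (i - 1))) (τ (s (i + 1)))) ∧
  (∀ i, i + 1 < ℓ → ∀ a b : ℝ, s i ≤ a → a < b → b ≤ s (i + 1) →
      (τ (s i) < τ (s (i + 1)) → τ a - τ b ≤ 2 * δ) ∧
      (τ (s (i + 1)) < τ (s i) → τ b - τ a ≤ 2 * δ)) ∧
  (∀ i, 1 ≤ i → i + 3 ≤ ℓ → 2 * δ < |τ (s (i + 1)) - τ (s i)|) ∧
  δ < |τ (s 1) - τ (s 0)| ∧ δ < |τ (s (ℓ - 1)) - τ (s (ℓ - 2))| ∧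
  (∀ i, 1 ≤ i → i + 3 ≤ ℓ → ∀ a ∈ Set.Icc (s i) (s (i + 1)),
      τ a ∈ Set.uIcc (τ (s i)) (τ (s (i + 1)))) ∧
  (2 < ℓ → ∀ a ∈ Set.Icc (s 0) (s 1),
      τ a ∈ Set.uIcc (τ (s 0)) (τ (s 1)) ∪ Set.Icc (τ (s 0) - δ) (τ (s 0) + δ)) ∧
  (2 < ℓ → ∀ a ∈ Set.Icc (s (ℓ - 2)) (s (ℓ - 1)),
      τ a ∈ Set.uIcc (τ (s (ℓ - 2))) (τ (s (ℓ - 1))) ∪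
        Set.Icc (τ (s (ℓ - 1)) - δ) (τ (s (ℓ - 1)) + δ)) ∧
  (ℓ = 2 → ∀ a ∈ Set.Icc (s 0) (s 1),
      τ a ∈ Set.uIcc (τ (s 0)) (τ (s 1)) ∪ Set.Icc (τ (s 0) - δ) (τ (s 0) + δ) ∪
        Set.Icc (τ (s 1) - δ) (τ (s 1) + δ))

/-- `k`-center cost: `max_i min_j d_F(τ i, C j)`. -/
noncomputable def costC (n k : ℕ) (τ C : ℕ → ℝ → ℝ) : ℝ :=
  ⨆ i : Fin n, ⨅ j : Fin k, frechetDist (τ i) (C j)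

/-- `k`-median cost: `Σ_i min_j d_F(τ i, C j)`. -/
noncomputable def costM (n k : ℕ) (τ C : ℕ → ℝ → ℝ) : ℝ :=
  ∑ i ∈ Finset.range n, ⨅ j : Fin k, frechetDist (τ i) (C j)

/-- Optimal `(k,ℓ)`-center cost. -/
noncomputable def optC (n k ℓ : ℕ) (τ : ℕ → ℝ → ℝ) : ℝ :=
  sInf {d : ℝ | ∃ C : ℕ → ℝ → ℝ, (∀ j, j < k → InDeltaL ℓ (C j)) ∧ d = costC n k τ C}

/-- Optimal `(k,ℓ)`-median cost. -/
noncomputable def optM (n k ℓ : ℕ) (τ : ℕ → ℝ → ℝ) : ℝ :=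
  sInf {d : ℝ | ∃ C : ℕ → ℝ → ℝ, (∀ j, j < k → InDeltaL ℓ (C j)) ∧ d = costM n k τ C}

/-!
On bounded curves the Fréchet distance is symmetric (invert the reparametrization) and satisfies
the triangle inequality (compose reparametrizations). Hence, per input curve and for any centers
`C ⊆ Δ_ℓ`, `d(τ, C) ≤ d(τ̂, C) + d(τ, τ̂)`, `d(τ̂, C) ≤ (1 + α) d(τ, C)` and
`d(τ, τ̂) ≤ α d(τ, C)`, the last two because `d(τ, C)` is at least the optimal simplification
error. Maximum and sum are monotone and sublinear, so these bounds pass to the costs and to the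
optima: `opt(P̂) ≤ (1 + α) opt(P)` and `D - cost(P̂, C) ≤ α opt(P)`, whence
`D ≤ β (1 + α) opt(P) + α opt(P)`.
-/

open Bornology

lemma exists_mem_Icc_succ_of_mem_Icc {α : Type*} [LinearOrder α] (t : ℕ → α) {u : α} :
    ∀ N, u ∈ Icc (t 0) (t (N + 1)) → ∃ i ≤ N, u ∈ Icc (t i) (t (i + 1))
  | 0, hu => ⟨0, le_rfl, hu⟩
  | N + 1, hu => by
    by_cases h : u ≤ t (N + 1)
    · obtain ⟨i, hi, hui⟩ := exists_mem_Icc_succ_of_mem_Icc t N ⟨hu.1, h⟩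
      exact ⟨i, by omega, hui⟩
    · exact ⟨N + 1, le_rfl, (not_le.1 h).le, hu.2⟩

lemma IsPolyOn.isBounded_image {τ : ℝ → ℝ} {m : ℕ} {t w : ℕ → ℝ} (h : IsPolyOn τ m t w) :
    IsBounded (τ '' Icc 0 1) := by
  obtain ⟨hm, ht0, htm, ht_lt, hτ⟩ := h
  refine (((finite_Iio m).image w).isCompact_convexHull (𝕜 := ℝ)).isBounded.subset ?_
  rintro _ ⟨u, hu, rfl⟩
  obtain ⟨i, hi, hui⟩ := exists_mem_Icc_succ_of_mem_Icc t (m - 2)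
    (by rwa [ht0, show m - 2 + 1 = m - 1 by omega, htm])
  have hlen : 0 < t (i + 1) - t i := sub_pos.2 (ht_lt i (by omega))
  refine segment_subset_convexHull (mem_image_of_mem w (show i ∈ Iio m by simp; omega))
    (mem_image_of_mem w (show i + 1 ∈ Iio m by simp; omega)) ?_
  rw [segment_eq_image', hτ i (by omega) u hui]
  refine ⟨(u - t i) / (t (i + 1) - t i), ⟨div_nonneg (by linarith [hui.1]) hlen.le, ?_⟩, rfl⟩
  rw [div_le_one hlen]
  linarith [hui.2]

lemma IsPolyCurve.isBounded_image {τ : ℝ → ℝ} (h : IsPolyCurve τ) : IsBounded (τ '' Icc 0 1) :=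
  let ⟨_, _, _, hp⟩ := h
  hp.isBounded_image

lemma InDeltaL.isBounded_image {ℓ : ℕ} {c : ℝ → ℝ} (h : InDeltaL ℓ c) :
    IsBounded (c '' Icc 0 1) :=
  let ⟨_, _, _, _, hp⟩ := h
  hp.isBounded_image

namespace IsReparam

variable {f g : ℝ → ℝ}

lemma mapsTo (hf : IsReparam f) : MapsTo f (Icc 0 1) (Icc 0 1) := fun t ht => by
  obtain ⟨_, hmono, h0, h1⟩ := hf
  constructor
  · simpa [h0] using hmono.monotoneOn (left_mem_Icc.2 zero_le_one) ht ht.1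
  · simpa [h1] using hmono.monotoneOn ht (right_mem_Icc.2 zero_le_one) ht.2

lemma id : IsReparam id := ⟨continuousOn_id, strictMonoOn_id, rfl, rfl⟩

lemma comp (hf : IsReparam f) (hg : IsReparam g) : IsReparam (f ∘ g) :=
  ⟨hf.1.comp hg.1 hg.mapsTo, hf.2.1.comp hg.2.1 hg.mapsTo,
    by simp [hg.2.2.1, hf.2.2.1], by simp [hg.2.2.2, hf.2.2.2]⟩

lemma exists_rightInverse (hf : IsReparam f) :
    ∃ g, IsReparam g ∧ ∀ t ∈ Icc (0 : ℝ) 1, f (g t) = t := by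
  set φ : Icc (0 : ℝ) 1 → Icc (0 : ℝ) 1 := hf.mapsTo.restrict
  obtain ⟨hcont, hmono, h0, h1⟩ := hf
  have hφ : StrictMono φ := fun a b hab => hmono a.2 b.2 hab
  have hφ_surj : Function.Surjective φ := fun y => by
    obtain ⟨x, hx, hfx⟩ := intermediate_value_Icc zero_le_one hcont (by rw [h0, h1]; exact y.2)
    exact ⟨⟨x, hx⟩, Subtype.ext hfx⟩
  set e := hφ.orderIsoOfSurjective φ hφ_surj
  set g := IccExtend zero_le_one (fun t => (e.symm t : ℝ))
  have hfg : ∀ t ∈ Icc (0 : ℝ) 1, f (g t) = t := fun t ht => by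
    simp only [g, IccExtend_of_mem _ _ ht]
    exact congrArg Subtype.val (e.apply_symm_apply ⟨t, ht⟩ : φ (e.symm ⟨t, ht⟩) = ⟨t, ht⟩)
  have hg_mem : ∀ t ∈ Icc (0 : ℝ) 1, g t ∈ Icc (0 : ℝ) 1 := fun t ht => by
    simp only [g, IccExtend_of_mem _ _ ht]
    exact Subtype.prop _
  have hg_fix : ∀ t ∈ Icc (0 : ℝ) 1, f t = t → g t = t := fun t ht hft =>
    hmono.injOn (hg_mem t ht) ht (by rw [hfg t ht, hft])
  refine ⟨g, ⟨?_, ?_, hg_fix 0 (left_mem_Icc.2 zero_le_one) h0,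
    hg_fix 1 (right_mem_Icc.2 zero_le_one) h1⟩, hfg⟩
  · exact (continuous_IccExtend_iff.2 (continuous_subtype_val.comp e.symm.continuous)).continuousOn
  · intro a ha b hb hab
    simp only [g, IccExtend_of_mem _ _ ha, IccExtend_of_mem _ _ hb]
    exact e.symm.strictMono (show (⟨a, ha⟩ : Icc (0 : ℝ) 1) < ⟨b, hb⟩ from hab)

end IsReparam

noncomputable def frechetDistAlong (τ π f : ℝ → ℝ) : ℝ :=
  ⨆ t : Icc (0 : ℝ) 1, |τ (f t) - π t|

section Frechet

variable {τ σ π f : ℝ → ℝ}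

lemma frechetDistAlong_nonneg (τ π f : ℝ → ℝ) : 0 ≤ frechetDistAlong τ π f :=
  Real.iSup_nonneg fun _ => abs_nonneg _

lemma frechetDist_nonneg (τ π : ℝ → ℝ) : 0 ≤ frechetDist τ π :=
  Real.iInf_nonneg fun f => frechetDistAlong_nonneg τ π f.1

lemma frechetDist_le_frechetDistAlong (hf : IsReparam f) :
    frechetDist τ π ≤ frechetDistAlong τ π f :=
  ciInf_le ⟨0, by rintro _ ⟨g, rfl⟩; exact frechetDistAlong_nonneg τ π g.1⟩
    (⟨f, hf⟩ : {f : ℝ → ℝ // IsReparam f})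

-- Boundedness matters: an unbounded supremum of reals is `0` by convention.
lemma abs_sub_le_frechetDistAlong (hτ : IsBounded (τ '' Icc 0 1))
    (hπ : IsBounded (π '' Icc 0 1)) (hf : IsReparam f) {t : ℝ} (ht : t ∈ Icc (0 : ℝ) 1) :
    |τ (f t) - π t| ≤ frechetDistAlong τ π f := by
  obtain ⟨a, ha⟩ := isBounded_iff_forall_norm_le.1 hτ
  obtain ⟨b, hb⟩ := isBounded_iff_forall_norm_le.1 hπ
  refine le_ciSup (f := fun s : Icc (0 : ℝ) 1 => |τ (f s) - π s|) ⟨a + b, ?_⟩ ⟨t, ht⟩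
  rintro _ ⟨s, rfl⟩
  exact (abs_sub _ _).trans (add_le_add (ha _ (mem_image_of_mem τ (hf.mapsTo s.2)))
    (hb _ (mem_image_of_mem π s.2)))

instance : Nonempty {f : ℝ → ℝ // IsReparam f} := ⟨⟨id, IsReparam.id⟩⟩

lemma frechetDist_comm_le (hτ : IsBounded (τ '' Icc 0 1)) (hπ : IsBounded (π '' Icc 0 1)) :
    frechetDist π τ ≤ frechetDist τ π := by
  refine le_ciInf fun f => ?_
  obtain ⟨g, hg, hfg⟩ := f.2.exists_rightInverse
  refine (frechetDist_le_frechetDistAlong hg).trans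
    (Real.iSup_le (fun t => ?_) (frechetDistAlong_nonneg τ π f.1))
  have := abs_sub_le_frechetDistAlong hτ hπ f.2 (hg.mapsTo t.2)
  rwa [hfg t t.2, abs_sub_comm] at this

lemma frechetDist_comm (hτ : IsBounded (τ '' Icc 0 1)) (hπ : IsBounded (π '' Icc 0 1)) :
    frechetDist τ π = frechetDist π τ :=
  le_antisymm (frechetDist_comm_le hπ hτ) (frechetDist_comm_le hτ hπ)

lemma frechetDist_triangle (hτ : IsBounded (τ '' Icc 0 1)) (hσ : IsBounded (σ '' Icc 0 1))
    (hπ : IsBounded (π '' Icc 0 1)) :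
    frechetDist τ π ≤ frechetDist τ σ + frechetDist σ π := by
  have along : ∀ f g, IsReparam f → IsReparam g →
      frechetDist τ π ≤ frechetDistAlong τ σ f + frechetDistAlong σ π g := fun f g hf hg =>
    (frechetDist_le_frechetDistAlong (hf.comp hg)).trans <| Real.iSup_le (fun t =>
      (abs_sub_le _ (σ (g t)) _).trans (add_le_add
        (abs_sub_le_frechetDistAlong hτ hσ hf (hg.mapsTo t.2))
        (abs_sub_le_frechetDistAlong hσ hπ hg t.2)))
      (add_nonneg (frechetDistAlong_nonneg _ _ _) (frechetDistAlong_nonneg _ _ _))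
  rw [← sub_le_iff_le_add]
  refine le_ciInf fun f => ?_
  rw [sub_le_iff_le_add', ← sub_le_iff_le_add]
  exact le_ciInf fun g => sub_le_iff_le_add'.2 (along f.1 g.1 f.2 g.2)

end Frechet

noncomputable def frechetInfDist (ℓ : ℕ) (σ : ℝ → ℝ) : ℝ :=
  sInf {d : ℝ | ∃ c : ℝ → ℝ, InDeltaL ℓ c ∧ d = frechetDist σ c}

section Centers

variable {ι : Type*} {σ σ' : ℝ → ℝ} {c : ι → ℝ → ℝ}

lemma iInf_frechetDist_nonneg (σ : ℝ → ℝ) (c : ι → ℝ → ℝ) :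
    0 ≤ ⨅ j, frechetDist σ (c j) :=
  Real.iInf_nonneg fun _ => frechetDist_nonneg _ _

lemma frechetInfDist_le_iInf [Nonempty ι] {ℓ : ℕ} (hc : ∀ j, InDeltaL ℓ (c j)) :
    frechetInfDist ℓ σ ≤ ⨅ j, frechetDist σ (c j) :=
  le_ciInf fun j => csInf_le ⟨0, by rintro _ ⟨_, _, rfl⟩; exact frechetDist_nonneg _ _⟩
    ⟨c j, hc j, rfl⟩

lemma iInf_frechetDist_le_add [Nonempty ι] (hσ : IsBounded (σ '' Icc 0 1))
    (hσ' : IsBounded (σ' '' Icc 0 1)) (hc : ∀ j, IsBounded (c j '' Icc 0 1)) :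
    ⨅ j, frechetDist σ (c j) ≤ (⨅ j, frechetDist σ' (c j)) + frechetDist σ σ' := by
  rw [← sub_le_iff_le_add]
  refine le_ciInf fun j => sub_le_iff_le_add.2 ?_
  calc ⨅ j, frechetDist σ (c j)
      ≤ frechetDist σ (c j) :=
        ciInf_le ⟨0, by rintro _ ⟨j, rfl⟩; exact frechetDist_nonneg _ _⟩ j
    _ ≤ frechetDist σ' (c j) + frechetDist σ σ' := by
        rw [add_comm]; exact frechetDist_triangle hσ hσ' (hc j)

lemma iInf_frechetDist_le_of_le_mul_frechetInfDist [Nonempty ι] {ℓ : ℕ} {α : ℝ} (hα : 0 ≤ α)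
    (hσ : IsBounded (σ '' Icc 0 1)) (hσ' : IsBounded (σ' '' Icc 0 1))
    (hc : ∀ j, InDeltaL ℓ (c j)) (happrox : frechetDist σ σ' ≤ α * frechetInfDist ℓ σ) :
    ⨅ j, frechetDist σ' (c j) ≤ (1 + α) * ⨅ j, frechetDist σ (c j) := by
  have hdist : frechetDist σ' σ ≤ α * ⨅ j, frechetDist σ (c j) := by
    rw [frechetDist_comm hσ' hσ]
    exact happrox.trans (mul_le_mul_of_nonneg_left (frechetInfDist_le_iInf hc) hα)
  linarith [iInf_frechetDist_le_add hσ' hσ fun j => (hc j).isBounded_image]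

end Centers

-- Abstracts the maximum (`k`-center) and the sum (`k`-median) of the `n` per-curve costs.
structure IsSublinearAggregation (n : ℕ) (A : (ℕ → ℝ) → ℝ) : Prop where
  mono : ∀ ⦃f g : ℕ → ℝ⦄, (∀ i < n, f i ≤ g i) → A f ≤ A g
  add_le : ∀ f g, A (f + g) ≤ A f + A g
  smul : ∀ ⦃c : ℝ⦄, 0 ≤ c → ∀ f, A (c • f) = c * A f

noncomputable def minAggregation {X : Type*} (A : (ℕ → ℝ) → ℝ) (adm : X → Prop)
    (cost : X → ℕ → ℝ) : ℝ :=
  sInf {d : ℝ | ∃ C, adm C ∧ d = A (cost C)}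

lemma le_mul_minAggregation {X : Type*} {A : (ℕ → ℝ) → ℝ} {adm : X → Prop}
    {cost : X → ℕ → ℝ} {c x : ℝ} (hc : 0 ≤ c) (hadm : ∃ C, adm C)
    (hx : ∀ C, adm C → x ≤ c * A (cost C)) : x ≤ c * minAggregation A adm cost := by
  rw [minAggregation, ← smul_eq_mul, ← Real.sInf_smul_of_nonneg hc]
  obtain ⟨C, hC⟩ := hadm
  refine le_csInf ⟨_, ⟨_, ⟨C, hC, rfl⟩, rfl⟩⟩ ?_
  rintro _ ⟨_, ⟨C', hC', rfl⟩, rfl⟩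
  exact hx C' hC'

namespace IsSublinearAggregation

variable {n : ℕ} {A : (ℕ → ℝ) → ℝ}

lemma iSup (n : ℕ) : IsSublinearAggregation n fun f => ⨆ i : Fin n, f i where
  mono _ _ h := ciSup_mono (finite_range _).bddAbove fun i => h i i.2
  add_le f g := by
    rcases isEmpty_or_nonempty (Fin n) with _ | _
    · simp
    · exact ciSup_le fun i => add_le_add
        (le_ciSup (f := fun i : Fin n => f i) (finite_range _).bddAbove i)
        (le_ciSup (f := fun i : Fin n => g i) (finite_range _).bddAbove i)
  smul _ hc _ := (Real.mul_iSup_of_nonneg hc _).symm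

lemma sum (n : ℕ) : IsSublinearAggregation n fun f => ∑ i ∈ Finset.range n, f i where
  mono _ _ h := Finset.sum_le_sum fun i hi => h i (Finset.mem_range.1 hi)
  add_le _ _ := (Finset.sum_add_distrib).le
  smul _ _ _ := (Finset.mul_sum _ _ _).symm

lemma nonneg (hA : IsSublinearAggregation n A) {f : ℕ → ℝ} (hf : ∀ i < n, 0 ≤ f i) :
    0 ≤ A f := by
  have h0 : A 0 = 0 := by simpa using hA.smul le_rfl 0
  exact h0 ▸ hA.mono hf

lemma le_add (hA : IsSublinearAggregation n A) {f g h : ℕ → ℝ}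
    (hfgh : ∀ i < n, f i ≤ g i + h i) : A f ≤ A g + A h :=
  (hA.mono hfgh).trans (hA.add_le g h)

lemma le_mul (hA : IsSublinearAggregation n A) {c : ℝ} (hc : 0 ≤ c) {f g : ℕ → ℝ}
    (hfg : ∀ i < n, f i ≤ c * g i) : A f ≤ c * A g :=
  (hA.mono hfg).trans (hA.smul hc g).le

variable {X : Type*} {adm : X → Prop} {cost : X → ℕ → ℝ}

lemma minAggregation_le (hA : IsSublinearAggregation n A) {C : X} (hC : adm C)
    (hcost : ∀ C, adm C → ∀ i < n, 0 ≤ cost C i) :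
    minAggregation A adm cost ≤ A (cost C) :=
  csInf_le ⟨0, by rintro _ ⟨C', hC', rfl⟩; exact hA.nonneg (hcost C' hC')⟩ ⟨C, hC, rfl⟩

lemma add_le_mul_minAggregation (hA : IsSublinearAggregation n A) {α β : ℝ} (hα : 0 ≤ α)
    (hβ : 0 ≤ β) {cost' : X → ℕ → ℝ} {err : ℕ → ℝ} {C : X} (hC : adm C)
    (hcost' : ∀ C, adm C → ∀ i < n, 0 ≤ cost' C i)
    (hcost'_le : ∀ C, adm C → ∀ i < n, cost' C i ≤ (1 + α) * cost C i)
    (herr : ∀ C, adm C → ∀ i < n, err i ≤ α * cost C i)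
    (happrox : A (cost' C) ≤ β * minAggregation A adm cost') :
    A (cost' C) + A err ≤ (α + β + α * β) * minAggregation A adm cost := by
  have hopt : minAggregation A adm cost' ≤ (1 + α) * minAggregation A adm cost :=
    le_mul_minAggregation (by linarith) ⟨C, hC⟩ fun C' hC' =>
      (hA.minAggregation_le hC' hcost').trans (hA.le_mul (by linarith) (hcost'_le C' hC'))
  have herr_le : A err ≤ α * minAggregation A adm cost :=
    le_mul_minAggregation hα ⟨C, hC⟩ fun C' hC' => hA.le_mul hα (herr C' hC')
  linarith [mul_le_mul_of_nonneg_left hopt hβ]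

end IsSublinearAggregation

theorem const_factor_via_simplification_general (α β : ℝ) (hα : 0 < α) (hβ : 0 < β)
    (k ℓ n : ℕ) (hk : 0 < k)
    (τ τh : ℕ → ℝ → ℝ)
    (hτ : ∀ i, i < n → IsPolyCurve (τ i))
    (hτh : ∀ i, i < n → InDeltaL ℓ (τh i) ∧
        frechetDist (τ i) (τh i) ≤
          α * sInf {d : ℝ | ∃ c : ℝ → ℝ, InDeltaL ℓ c ∧ d = frechetDist (τ i) c})
    (C : ℕ → ℝ → ℝ) (hC : ∀ j, j < k → InDeltaL ℓ (C j)) :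
    (costC n k τh C ≤ β * optC n k ℓ τh →
      costC n k τ C ≤ costC n k τh C + (⨆ i : Fin n, frechetDist (τ i) (τh i)) ∧
      costC n k τh C + (⨆ i : Fin n, frechetDist (τ i) (τh i)) ≤
        (α + β + α * β) * optC n k ℓ τ) ∧
    (costM n k τh C ≤ β * optM n k ℓ τh →
      costM n k τ C ≤ costM n k τh C + ∑ i ∈ Finset.range n, frechetDist (τ i) (τh i) ∧
      costM n k τh C + (∑ i ∈ Finset.range n, frechetDist (τ i) (τh i)) ≤
        (α + β + α * β) * optM n k ℓ τ) := by
  have : Nonempty (Fin k) := ⟨⟨0, hk⟩⟩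
  have hτ_bdd i (hi : i < n) := (hτ i hi).isBounded_image
  have hτh_bdd i (hi : i < n) := (hτh i hi).1.isBounded_image
  have hcost_le_add : ∀ i < n, ⨅ j : Fin k, frechetDist (τ i) (C j) ≤
      (⨅ j : Fin k, frechetDist (τh i) (C j)) + frechetDist (τ i) (τh i) := fun i hi =>
    iInf_frechetDist_le_add (hτ_bdd i hi) (hτh_bdd i hi) fun j => (hC j j.2).isBounded_image
  have hcost'_le : ∀ C' : ℕ → ℝ → ℝ, (∀ j, j < k → InDeltaL ℓ (C' j)) → ∀ i < n,
      ⨅ j : Fin k, frechetDist (τh i) (C' j) ≤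
        (1 + α) * ⨅ j : Fin k, frechetDist (τ i) (C' j) :=
    fun C' hC' i hi => iInf_frechetDist_le_of_le_mul_frechetInfDist hα.le (hτ_bdd i hi)
      (hτh_bdd i hi) (fun j => hC' j j.2) (hτh i hi).2
  have herr : ∀ C' : ℕ → ℝ → ℝ, (∀ j, j < k → InDeltaL ℓ (C' j)) → ∀ i < n,
      frechetDist (τ i) (τh i) ≤ α * ⨅ j : Fin k, frechetDist (τ i) (C' j) :=
    fun C' hC' i hi => (hτh i hi).2.trans
      (mul_le_mul_of_nonneg_left (frechetInfDist_le_iInf fun j => hC' j j.2) hα.le)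
  have hcost'_nonneg (C' : ℕ → ℝ → ℝ) (_ : ∀ j, j < k → InDeltaL ℓ (C' j)) i (_ : i < n) :=
    iInf_frechetDist_nonneg (τh i) fun j : Fin k => C' j
  -- `costC`, `costM` and `optC`, `optM` unfold to `iSup`, `sum` and `minAggregation`.
  exact ⟨fun happrox => ⟨(IsSublinearAggregation.iSup n).le_add hcost_le_add,
      (IsSublinearAggregation.iSup n).add_le_mul_minAggregation hα.le hβ.le hC
        hcost'_nonneg hcost'_le herr happrox⟩,
    fun happrox => ⟨(IsSublinearAggregation.sum n).le_add hcost_le_add,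
      (IsSublinearAggregation.sum n).add_le_mul_minAggregation hα.le hβ.le hC
        hcost'_nonneg hcost'_le herr happrox⟩⟩

/-- Lemma 6.1: let `τh i ∈ Δ_ℓ` be `α`-approximate minimum-error
`ℓ`-simplifications of the input curves `τ i`, and let `C` be a set of `k` centers
in `Δ_ℓ`. (a) If `C` is a `β`-approximation for the `(k,ℓ)`-center problem on the
simplifications, then `D_∞ = cost_∞(P̂, C) + max_i d_F(τ i, τh i)` satisfies
`cost_∞(P, C) ≤ D_∞ ≤ (α + β + αβ)·opt^{(∞)}_{k,ℓ}(P)`; (b) analogously for the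
`(k,ℓ)`-median problem with sums instead of maxima. -/
theorem const_factor_via_simplification (α β : ℝ) (hα : 0 < α) (hβ : 0 < β)
    (k ℓ n : ℕ) (hk : 0 < k) (hn : 0 < n)
    (τ τh : ℕ → ℝ → ℝ)
    (hτ : ∀ i, i < n → IsPolyCurve (τ i))
    (hτh : ∀ i, i < n → InDeltaL ℓ (τh i) ∧
        frechetDist (τ i) (τh i) ≤
          α * sInf {d : ℝ | ∃ c : ℝ → ℝ, InDeltaL ℓ c ∧ d = frechetDist (τ i) c})
    (C : ℕ → ℝ → ℝ) (hC : ∀ j, j < k → InDeltaL ℓ (C j)) :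
    (costC n k τh C ≤ β * optC n k ℓ τh →
      costC n k τ C ≤ costC n k τh C + (⨆ i : Fin n, frechetDist (τ i) (τh i)) ∧
      costC n k τh C + (⨆ i : Fin n, frechetDist (τ i) (τh i)) ≤
        (α + β + α * β) * optC n k ℓ τ) ∧
    (costM n k τh C ≤ β * optM n k ℓ τh →
      costM n k τ C ≤ costM n k τh C + ∑ i ∈ Finset.range n, frechetDist (τ i) (τh i) ∧
      costM n k τh C + (∑ i ∈ Finset.range n, frechetDist (τ i) (τh i)) ≤
        (α + β + α * β) * optM n k ℓ τ) :=
  const_factor_via_simplification_general α β hα hβ k ℓ n hk τ τh hτ hτh C hC
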